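/- arXiv:2011.02894 — 8 statements merged into one kernel-verified Lean document; each statement's English description precedes it below -/
import Mathlib

section
/- Let w be a graph parameter and let C be a hereditary class of finite simple graphs on which w is unbounded. Suppose C is minimal with this property, i.e., no proper hereditary subclass of C has w unbounded. Then every antichain under the induced subgraph relation contained in C has w bounded. -/
open SimpleGraph

/-- A finite simple graph: a number of vertices together with a simple graph structure
on `Fin n`. -/
abbrev FinGraph := Σ n : ℕ, SimpleGraph (Fin n)

/-- `H` is an induced subgraph of `G`: there is an injective map of the vertices of `H`
into the vertices of `G` preserving both adjacency and non-adjacency. -/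
def IsIndSubgraph (H G : FinGraph) : Prop := Nonempty (H.2 ↪g G.2)

/-- `G` and `H` are isomorphic graphs. -/
def GraphIso (G H : FinGraph) : Prop := Nonempty (G.2 ≃g H.2)

/-- A class of finite graphs: a set of finite simple graphs closed under isomorphism. -/
def IsGraphClass (C : Set FinGraph) : Prop :=
  ∀ ⦃G H : FinGraph⦄, G ∈ C → GraphIso G H → H ∈ C

/-- A hereditary class: a class closed under isomorphism and under induced subgraphs. -/
def IsHereditaryClass (C : Set FinGraph) : Prop :=
  IsGraphClass C ∧ ∀ ⦃G H : FinGraph⦄, G ∈ C → IsIndSubgraph H G → H ∈ C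


/-- A graph parameter is invariant under isomorphism. -/
def IsoInvariant (w : FinGraph → ℕ) : Prop :=
  ∀ G H : FinGraph, GraphIso G H → w G = w H

/-- `w` is unbounded on the class `C`. -/
def UnboundedOn (w : FinGraph → ℕ) (C : Set FinGraph) : Prop :=
  ∀ k : ℕ, ∃ G ∈ C, k < w G

/-- `w` is bounded on the class `C`. -/
def BoundedOn (w : FinGraph → ℕ) (C : Set FinGraph) : Prop :=
  ∃ k : ℕ, ∀ G ∈ C, w G ≤ k

/-- An antichain under the induced subgraph relation: for any two non-isomorphic
members, neither is an induced subgraph of the other. -/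
def IsGraphAntichain (A : Set FinGraph) : Prop :=
  ∀ G ∈ A, ∀ H ∈ A, ¬ GraphIso G H → ¬ IsIndSubgraph G H

/-- If `C` is a hereditary class on which the graph parameter `w` is
unbounded, and `C` is minimal with this property (no proper hereditary subclass of `C`
has `w` unbounded), then `w` is bounded on every antichain contained in `C`. -/
theorem stmt3 (w : FinGraph → ℕ) (hw : IsoInvariant w)
    (C : Set FinGraph) (hC : IsHereditaryClass C) (hU : UnboundedOn w C)
    (hmin : ∀ D : Set FinGraph, IsHereditaryClass D → D ⊂ C → ¬ UnboundedOn w D) :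
    ∀ A : Set FinGraph, A ⊆ C → IsGraphAntichain A → BoundedOn w A := by
  intro A hAC hA
  rcases Set.eq_empty_or_nonempty A with rfl | ⟨G0, hG0⟩
  · exact ⟨0, fun G hG => absurd hG (Set.notMem_empty G)⟩
  · set D : Set FinGraph := {H | H ∈ C ∧ ¬ IsIndSubgraph G0 H} with hDdef
    have hDher : IsHereditaryClass D := by
      constructor
      · rintro H H' ⟨hHC, hn⟩ hiso
        refine ⟨hC.1 hHC hiso, fun ⟨e⟩ => hn ?_⟩
        exact ⟨((Classical.choice hiso).symm.toEmbedding).comp e⟩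
      · rintro H H' ⟨hHC, hn⟩ hsub
        refine ⟨hC.2 hHC hsub, fun ⟨e⟩ => hn ?_⟩
        exact ⟨(Classical.choice hsub).comp e⟩
    have hG0C : G0 ∈ C := hAC hG0
    have hDss : D ⊂ C := by
      refine ⟨fun H hH => hH.1, fun hsub => ?_⟩
      have : G0 ∈ D := hsub hG0C
      exact this.2 ⟨SimpleGraph.Embedding.refl⟩
    have hb := hmin D hDher hDss
    rw [UnboundedOn, not_forall] at hb
    obtain ⟨k, hk0⟩ := hb
    rw [not_exists] at hk0
    have hb : ∃ k : ℕ, ∀ G, ¬ (G ∈ D ∧ k < w G) := ⟨k, fun G h => hk0 G ⟨h.1, h.2⟩⟩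
    obtain ⟨k, hk⟩ := hb
    refine ⟨max k (w G0), fun H hH => ?_⟩
    by_cases hiso : GraphIso G0 H
    · rw [← hw G0 H hiso]; exact le_max_right _ _
    · have hHD : H ∈ D := ⟨hAC hH, hA G0 hG0 H hH hiso⟩
      have := hk H
      rw [not_and, not_lt] at this
      exact le_trans (this hHD) (le_max_left _ _)
end

section
/- Let w be a graph parameter and let C be a hereditary class of finite simple graphs on which w is unbounded. Suppose C contains no minimal hereditary subclass with w unbounded, i.e., every hereditary subclass D ⊆ C on which w is unbounded has a proper hereditary subclass on which w is unbounded. Then C contains an antichain under the induced subgraph relation on which w is unbounded. -/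
open SimpleGraph

lemma ind_refl' (G : FinGraph) : IsIndSubgraph G G := ⟨SimpleGraph.Embedding.refl⟩

lemma ind_trans' {H G K : FinGraph} (h1 : IsIndSubgraph H G) (h2 : IsIndSubgraph G K) :
    IsIndSubgraph H K := ⟨h2.some.comp h1.some⟩

lemma iso_ind' {G H : FinGraph} (h : GraphIso G H) : IsIndSubgraph G H :=
  ⟨h.some.toEmbedding⟩

lemma iso_ind_symm' {G H : FinGraph} (h : GraphIso G H) : IsIndSubgraph H G :=
  ⟨h.some.symm.toEmbedding⟩

noncomputable def Mbound (w : FinGraph → ℕ) (n : ℕ) : ℕ :=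
  (Finset.range (n+1)).sup fun k => Finset.univ.sup fun G : SimpleGraph (Fin k) => w ⟨k, G⟩

lemma w_le_Mbound (w : FinGraph → ℕ) {H G : FinGraph} (h : IsIndSubgraph H G) :
    w H ≤ Mbound w G.1 := by
  have hcard : H.1 ≤ G.1 := by
    have := Fintype.card_le_of_embedding h.some.toEmbedding
    simpa using this
  have h1 : w H ≤ Finset.univ.sup fun G' : SimpleGraph (Fin H.1) => w ⟨H.1, G'⟩ := by
    have := Finset.le_sup (f := fun G' : SimpleGraph (Fin H.1) => w ⟨H.1, G'⟩)
      (Finset.mem_univ H.2)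
    simpa using this
  refine h1.trans ?_
  exact Finset.le_sup (f := fun k => Finset.univ.sup fun G' : SimpleGraph (Fin k) => w ⟨k, G'⟩)
    (Finset.mem_range.2 (Nat.lt_succ_of_le hcard))

lemma sub_hered {D : Set FinGraph} (hD : IsHereditaryClass D) (G : FinGraph) :
    IsHereditaryClass {H ∈ D | ¬ IsIndSubgraph G H} := by
  constructor
  · intro H H' hH hiso
    exact ⟨hD.1 hH.1 hiso, fun hc => hH.2 (ind_trans' hc (iso_ind_symm' hiso))⟩
  · intro H H' hH hsub
    exact ⟨hD.2 hH.1 hsub, fun hc => hH.2 (ind_trans' hc hsub)⟩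

lemma key_claim (w : FinGraph → ℕ) (C : Set FinGraph) (hC : IsHereditaryClass C)
    (hnomin : ∀ D : Set FinGraph, D ⊆ C → IsHereditaryClass D → UnboundedOn w D →
      ∃ D' : Set FinGraph, D' ⊂ D ∧ IsHereditaryClass D' ∧ UnboundedOn w D') :
    ∀ D : Set FinGraph, D ⊆ C → IsHereditaryClass D → UnboundedOn w D → ∀ t : ℕ,
      ∃ G ∈ D, t < w G ∧ UnboundedOn w {H ∈ D | ¬ IsIndSubgraph G H} := by
  intro D hDC hDh hDu t
  by_contra hcon
  push_neg at hcon
  -- every high-w G in D embeds into all sufficiently high-w members of D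
  have hbd : ∀ G ∈ D, t < w G → ∃ b, ∀ H ∈ D, b < w H → IsIndSubgraph G H := by
    intro G hG hGt
    have := hcon G hG hGt
    unfold UnboundedOn at this
    push_neg at this
    obtain ⟨b, hb⟩ := this
    refine ⟨b, fun H hH hbH => ?_⟩
    by_contra hnot
    exact absurd (hb H ⟨hH, hnot⟩) (not_le.2 hbH)
  -- step in the chain
  have hstep : ∀ G ∈ D, t < w G →
      ∃ G', G' ∈ D ∧ t < w G' ∧ w G < w G' ∧ IsIndSubgraph G G' := by
    intro G hG hGt
    obtain ⟨b, hb⟩ := hbd G hG hGt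
    obtain ⟨G', hG', hwG'⟩ := hDu (max b (w G))
    refine ⟨G', hG', lt_trans (hGt.trans_le (le_max_right b (w G))) hwG',
      (le_max_right b (w G)).trans_lt hwG', hb G' hG' ((le_max_left b (w G)).trans_lt hwG')⟩
  obtain ⟨G0, hG0, hwG0⟩ := hDu t
  -- build the chain by iteration
  let F : {G : FinGraph // G ∈ D ∧ t < w G} → {G : FinGraph // G ∈ D ∧ t < w G} :=
    fun p => ⟨(hstep p.1 p.2.1 p.2.2).choose, (hstep p.1 p.2.1 p.2.2).choose_spec.1,
      (hstep p.1 p.2.1 p.2.2).choose_spec.2.1⟩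
  have hF : ∀ p, w p.1 < w (F p).1 ∧ IsIndSubgraph p.1 (F p).1 :=
    fun p => ⟨(hstep p.1 p.2.1 p.2.2).choose_spec.2.2.1,
      (hstep p.1 p.2.1 p.2.2).choose_spec.2.2.2⟩
  let c : ℕ → {G : FinGraph // G ∈ D ∧ t < w G} := fun n => F^[n] ⟨G0, hG0, hwG0⟩
  have hcsucc : ∀ n, c (n+1) = F (c n) := fun n => Function.iterate_succ_apply' F n _
  have hgrow : ∀ n, w (c n).1 < w (c (n+1)).1 := fun n => by rw [hcsucc n]; exact (hF (c n)).1
  have hchain : ∀ n m, n ≤ m → IsIndSubgraph (c n).1 (c m).1 := by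
    intro n m hnm
    induction m, hnm using Nat.le_induction with
    | base => exact ind_refl' _
    | succ m hnm ih =>
      refine ind_trans' ih ?_
      rw [hcsucc m]; exact (hF (c m)).2
  have hwlow : ∀ n, n ≤ w (c n).1 := by
    intro n
    induction n with
    | zero => exact Nat.zero_le _
    | succ n ih => exact Nat.lt_of_le_of_lt ih (hgrow n)
  -- the downward closure of the chain
  set Ds : Set FinGraph := {H | ∃ n, IsIndSubgraph H (c n).1} with hDs
  have hDsD : Ds ⊆ D := fun H ⟨n, hn⟩ => hDh.2 (c n).2.1 hn
  have hDsC : Ds ⊆ C := fun H hH => hDC (hDsD hH)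
  have hDsh : IsHereditaryClass Ds := by
    constructor
    · rintro H H' ⟨n, hn⟩ hiso
      exact ⟨n, ind_trans' (iso_ind_symm' hiso) hn⟩
    · rintro H H' ⟨n, hn⟩ hsub
      exact ⟨n, ind_trans' hsub hn⟩
  have hDsu : UnboundedOn w Ds := fun k =>
    ⟨(c (k+1)).1, ⟨k+1, ind_refl' _⟩, Nat.lt_of_lt_of_le (Nat.lt_succ_self k) (hwlow (k+1))⟩
  obtain ⟨E, hEss, hEh, hEu⟩ := hnomin Ds hDsC hDsh hDsu
  refine hEss.2 ?_
  rintro X ⟨n, hXn⟩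
  obtain ⟨b, hb⟩ := hbd (c n).1 (c n).2.1 (c n).2.2
  obtain ⟨H, hHE, hbH⟩ := hEu b
  have hHD : H ∈ D := hDsD (hEss.1 hHE)
  have hcnH : IsIndSubgraph (c n).1 H := hb H hHD hbH
  exact hEh.2 (hEh.2 hHE hcnH) hXn

/-- If `C` is a hereditary class on which `w` is unbounded and `C`
contains no minimal hereditary subclass with `w` unbounded (i.e. every hereditary
subclass of `C` with `w` unbounded has a proper hereditary subclass with `w`
unbounded), then `C` contains an antichain on which `w` is unbounded. -/
theorem stmt4 (w : FinGraph → ℕ) (hw : IsoInvariant w)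
    (C : Set FinGraph) (hC : IsHereditaryClass C) (hU : UnboundedOn w C)
    (hnomin : ∀ D : Set FinGraph, D ⊆ C → IsHereditaryClass D → UnboundedOn w D →
      ∃ D' : Set FinGraph, D' ⊂ D ∧ IsHereditaryClass D' ∧ UnboundedOn w D') :
    ∃ A : Set FinGraph, A ⊆ C ∧ IsGraphAntichain A ∧ UnboundedOn w A := by
  have claim := key_claim w C hC hnomin
  let S := {D : Set FinGraph // D ⊆ C ∧ IsHereditaryClass D ∧ UnboundedOn w D} × ℕ
  let pick : S → FinGraph := fun p => (claim p.1.1 p.1.2.1 p.1.2.2.1 p.1.2.2.2 p.2).choose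
  have hpick : ∀ p : S, pick p ∈ p.1.1 ∧ p.2 < w (pick p) ∧
      UnboundedOn w {H ∈ p.1.1 | ¬ IsIndSubgraph (pick p) H} := fun p => by
    obtain ⟨h1, h2, h3⟩ := (claim p.1.1 p.1.2.1 p.1.2.2.1 p.1.2.2.2 p.2).choose_spec
    exact ⟨h1, h2, h3⟩
  let next : S → S := fun p =>
    (⟨{H ∈ p.1.1 | ¬ IsIndSubgraph (pick p) H},
      fun H hH => p.1.2.1 hH.1, sub_hered p.1.2.2.1 (pick p), (hpick p).2.2⟩,
     max p.2 (Mbound w (pick p).1) + 1)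
  let s : ℕ → S := fun n => next^[n] (⟨C, subset_rfl, hC, hU⟩, 0)
  have hssucc : ∀ n, s (n+1) = next (s n) := fun n => Function.iterate_succ_apply' next n _
  let G : ℕ → FinGraph := fun n => pick (s n)
  have hGmem : ∀ n, G n ∈ (s n).1.1 := fun n => (hpick (s n)).1
  have hGw : ∀ n, (s n).2 < w (G n) := fun n => (hpick (s n)).2.1
  have hD1 : ∀ n, (s (n+1)).1.1 = {H ∈ (s n).1.1 | ¬ IsIndSubgraph (G n) H} := fun n => by
    rw [hssucc n]
  have ht1 : ∀ n, (s (n+1)).2 = max (s n).2 (Mbound w (G n).1) + 1 := fun n => by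
    rw [hssucc n]
  have hDmono : ∀ n m, n ≤ m → (s m).1.1 ⊆ (s n).1.1 := by
    intro n m hnm
    induction m, hnm using Nat.le_induction with
    | base => exact subset_rfl
    | succ m hnm ih =>
      refine subset_trans ?_ ih
      rw [hD1 m]
      exact Set.sep_subset _ _
  have htmono : ∀ n m, n ≤ m → (s n).2 ≤ (s m).2 := by
    intro n m hnm
    induction m, hnm using Nat.le_induction with
    | base => exact le_rfl
    | succ m hnm ih =>
      refine le_trans ih ?_
      rw [ht1 m]
      exact le_trans (le_max_left _ _) (Nat.le_succ _)
  have htn : ∀ n, n ≤ (s n).2 := by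
    intro n
    induction n with
    | zero => exact Nat.zero_le _
    | succ n ih =>
      rw [ht1 n]
      exact Nat.succ_le_succ (le_trans ih (le_max_left _ _))
  have hcross : ∀ n m, n < m →
      ¬ IsIndSubgraph (G n) (G m) ∧ ¬ IsIndSubgraph (G m) (G n) := by
    intro n m hnm
    constructor
    · have h := hDmono (n+1) m hnm (hGmem m)
      rw [hD1 n] at h
      exact h.2
    · intro hemb
      have h1 : w (G m) ≤ Mbound w (G n).1 := w_le_Mbound w hemb
      have h2 : Mbound w (G n).1 < (s (n+1)).2 := by
        rw [ht1 n]
        exact Nat.lt_succ_of_le (le_max_right _ _)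
      have h3 : (s (n+1)).2 ≤ (s m).2 := htmono _ _ hnm
      have h4 := hGw m
      omega
  refine ⟨Set.range G, ?_, ?_, ?_⟩
  · rintro _ ⟨n, rfl⟩
    exact (s n).1.2.1 (hGmem n)
  · rintro _ ⟨n, rfl⟩ _ ⟨m, rfl⟩ hniso
    rcases lt_trichotomy n m with h | h | h
    · exact (hcross n m h).1
    · subst h
      exact absurd (⟨Iso.refl⟩ : GraphIso (G n) (G n)) hniso
    · exact (hcross m n h).2
  · intro k
    exact ⟨G k, ⟨k, rfl⟩, lt_of_le_of_lt (htn k) (hGw k)⟩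
end

section
/- For natural numbers m ≠ n (with m, n ≥ 1), the graph I_m is not an induced subgraph of the graph I_n; consequently the family {I_n | n ≥ 1} is an infinite antichain under the induced subgraph relation. -/
open SimpleGraph

/-- The graph `I_n`: a path `c_1, …, c_n` (represented by the vertices `4, …, n+3`),
with two pendant vertices `e_0 = 0`, `e_1 = 1` attached to `c_1 = 4` and two pendant
vertices `e_2 = 2`, `e_3 = 3` attached to `c_n = n+3`. -/
def Igraph (n : ℕ) : SimpleGraph (Fin (n + 4)) :=
  SimpleGraph.fromRel (fun a b =>
    (4 ≤ (a : ℕ) ∧ (b : ℕ) = (a : ℕ) + 1) ∨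
    ((a : ℕ) ≤ 1 ∧ (b : ℕ) = 4) ∨
    (((a : ℕ) = 2 ∨ (a : ℕ) = 3) ∧ (b : ℕ) = n + 3))

/-- `I_n` as a finite graph. -/
def IgraphF (n : ℕ) : FinGraph := ⟨n + 4, Igraph n⟩

def posN (n a : ℕ) : ℤ := if a ≤ 1 then -1 else if a ≤ 3 then n else a - 4
def pos (n : ℕ) (v : Fin (n+4)) : ℤ := posN n v.val

lemma abs_sub_one (a b : ℤ) : |a - b| = 1 ↔ (a - b = 1 ∨ a - b = -1) :=
  abs_eq (by norm_num)

lemma pos_range (n : ℕ) (v : Fin (n+4)) : -1 ≤ pos n v ∧ pos n v ≤ n := by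
  have := v.isLt; unfold pos posN; split_ifs <;> omega

lemma adj_iff (n : ℕ) (hn : 1 ≤ n) (v w : Fin (n+4)) :
    (Igraph n).Adj v w ↔ |pos n v - pos n w| = 1 := by
  have hv := v.isLt; have hw := w.isLt
  rw [abs_eq (by norm_num : (0:ℤ) ≤ 1)]
  simp only [Igraph, fromRel_adj, pos, posN, ne_eq, Fin.ext_iff]
  split_ifs <;> omega

lemma pos_eq (n : ℕ) {v w : Fin (n+4)} (h : pos n v = pos n w) :
    v = w ∨ pos n v = -1 ∨ pos n v = (n:ℤ) := by
  refine (em (v = w)).elim Or.inl (fun hne => Or.inr ?_)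
  replace hne : (v:ℕ) ≠ (w:ℕ) := fun hh => hne (Fin.ext hh)
  have hv := v.isLt; have hw := w.isLt
  unfold pos posN at h ⊢; split_ifs at h ⊢ <;> omega

lemma pos_fib1 (n : ℕ) {w : Fin (n+4)} (h : pos n w = -1) : (w:ℕ) ≤ 1 := by
  have := w.isLt; unfold pos posN at h; split_ifs at h <;> omega

lemma pos_fibN (n : ℕ) {w : Fin (n+4)} (h : pos n w = (n:ℤ)) :
    2 ≤ (w:ℕ) ∧ (w:ℕ) ≤ 3 := by
  have := w.isLt; unfold pos posN at h; split_ifs at h <;> omega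

lemma pos_three (n : ℕ) {u v w : Fin (n+4)} (huv : u ≠ v) (huw : u ≠ w) (hvw : v ≠ w)
    (h1 : pos n u = pos n v) (h2 : pos n v = pos n w) : False := by
  have duv : (u:ℕ) ≠ (v:ℕ) := fun hh => huv (Fin.ext hh)
  have duw : (u:ℕ) ≠ (w:ℕ) := fun hh => huw (Fin.ext hh)
  have dvw : (v:ℕ) ≠ (w:ℕ) := fun hh => hvw (Fin.ext hh)
  rcases pos_eq n h1 with h | h | h
  · exact huv h
  · have l1 := pos_fib1 n h
    have l2 := pos_fib1 n (h1 ▸ h)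
    have l3 := pos_fib1 n ((h1.trans h2) ▸ h)
    omega
  · have l1 := pos_fibN n h
    have l2 := pos_fibN n (h1 ▸ h)
    have l3 := pos_fibN n ((h1.trans h2) ▸ h)
    omega

lemma anchorZ {x p q r nn : ℤ}
    (a1 : p - x = 1 ∨ p - x = -1) (a2 : q - x = 1 ∨ q - x = -1)
    (a3 : r - x = 1 ∨ r - x = -1)
    (k12 : ¬ p = q ∨ p = -1 ∨ p = nn)
    (k13 : ¬ p = r ∨ p = -1 ∨ p = nn)
    (k23 : ¬ q = r ∨ q = -1 ∨ q = nn)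
    (hx : -1 ≤ x ∧ x ≤ nn) : x = 0 ∨ x = nn - 1 := by omega

lemma not_emb {m n : ℕ} (hm : 1 ≤ m) (hn : 1 ≤ n) (hmn : m ≠ n) :
    ¬ IsIndSubgraph (IgraphF m) (IgraphF n) := by
  rintro ⟨f⟩
  rcases lt_or_gt_of_ne hmn with hlt | hgt
  swap
  · have hcard : Fintype.card (Fin (m+4)) ≤ Fintype.card (Fin (n+4)) :=
      Fintype.card_le_of_injective f f.injective
    simp only [Fintype.card_fin] at hcard
    omega
  -- m < n
  obtain ⟨P, hPval⟩ : ∃ P : ℕ → ℤ, ∀ k (h : k < m+4), P k = pos n (f ⟨k,h⟩) :=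
    ⟨fun k => if h : k < m+4 then pos n (f ⟨k,h⟩) else 0, fun k h => dif_pos h⟩
  have hPadj : ∀ (a b : ℕ) (ha : a < m+4) (hb : b < m+4),
      |posN m a - posN m b| = 1 → |P a - P b| = 1 := by
    intro a b ha hb h
    rw [hPval a ha, hPval b hb]
    exact (adj_iff n hn _ _).mp (f.map_rel_iff.mpr ((adj_iff m hm ⟨a,ha⟩ ⟨b,hb⟩).mpr h))
  have hPinj : ∀ (a b : ℕ) (ha : a < m+4) (hb : b < m+4), a ≠ b →
      ¬ (P a = P b) ∨ P a = -1 ∨ P a = (n:ℤ) := by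
    intro a b ha hb hab
    by_cases he : P a = P b
    · refine Or.inr ?_
      rw [hPval a ha] at he ⊢
      rw [hPval b hb] at he
      rcases pos_eq n he with h | h | h
      · exact absurd (congrArg Fin.val (f.injective h) : a = b) hab
      · exact Or.inl h
      · exact Or.inr h
    · exact Or.inl he
  have hP3 : ∀ (a b c : ℕ) (ha : a < m+4) (hb : b < m+4) (hc : c < m+4),
      a ≠ b → a ≠ c → b ≠ c → ¬ (P a = P b ∧ P b = P c) := by
    rintro a b c ha hb hc hab hac hbc ⟨e1, e2⟩
    rw [hPval a ha, hPval b hb] at e1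
    rw [hPval b hb, hPval c hc] at e2
    exact pos_three n (fun h => hab (congrArg Fin.val (f.injective h) : a = b))
      (fun h => hac (congrArg Fin.val (f.injective h) : a = c))
      (fun h => hbc (congrArg Fin.val (f.injective h) : b = c)) e1 e2
  have hPrange : ∀ (a : ℕ) (ha : a < m+4), -1 ≤ P a ∧ P a ≤ n := by
    intro a ha; rw [hPval a ha]; exact pos_range n _
  have h0 : (0:ℕ) < m+4 := by omega
  have h1 : (1:ℕ) < m+4 := by omega
  have h2 : (2:ℕ) < m+4 := by omega
  have h3 : (3:ℕ) < m+4 := by omega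
  have h4 : (4:ℕ) < m+4 := by omega
  have hm3 : m+3 < m+4 := by omega
  rcases Nat.lt_or_ge m 2 with hm1 | hm2
  · -- m = 1
    have hm1' : m = 1 := by omega
    subst hm1'
    have hn2 : 2 ≤ n := by omega
    have a0 := hPadj 0 4 h0 h4 (by rw [abs_sub_one]; unfold posN; split_ifs <;> omega)
    have a1 := hPadj 1 4 h1 h4 (by rw [abs_sub_one]; unfold posN; split_ifs <;> omega)
    have a2 := hPadj 2 4 h2 h4 (by rw [abs_sub_one]; unfold posN; split_ifs <;> omega)
    have a3 := hPadj 3 4 h3 h4 (by rw [abs_sub_one]; unfold posN; split_ifs <;> omega)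
    rw [abs_sub_one] at a0 a1 a2 a3
    have k01 := hPinj 0 1 h0 h1 (by omega)
    have k02 := hPinj 0 2 h0 h2 (by omega)
    have k03 := hPinj 0 3 h0 h3 (by omega)
    have k12 := hPinj 1 2 h1 h2 (by omega)
    have k13 := hPinj 1 3 h1 h3 (by omega)
    have k23 := hPinj 2 3 h2 h3 (by omega)
    have t012 := hP3 0 1 2 h0 h1 h2 (by omega) (by omega) (by omega)
    have t013 := hP3 0 1 3 h0 h1 h3 (by omega) (by omega) (by omega)
    have t023 := hP3 0 2 3 h0 h2 h3 (by omega) (by omega) (by omega)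
    have t123 := hP3 1 2 3 h1 h2 h3 (by omega) (by omega) (by omega)
    rcases a0 with a0 | a0 <;> rcases a1 with a1 | a1 <;>
      rcases a2 with a2 | a2 <;> rcases a3 with a3 | a3 <;> omega
  · -- m ≥ 2
    have h5 : (5:ℕ) < m+4 := by omega
    have hm2' : m+2 < m+4 := by omega
    have r4 := hPrange 4 h4
    have rm3 := hPrange (m+3) hm3
    -- walk along the path
    have step : ∀ k, 4 ≤ k → k + 1 ≤ m+3 → |P (k+1) - P k| = 1 := by
      intro k hk1 hk2
      exact hPadj (k+1) k (by omega) (by omega)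
        (by rw [abs_sub_one]; unfold posN; split_ifs <;> omega)
    have ind : ∀ j, 4 + j ≤ m+3 → |P (4+j) - P 4| ≤ (j:ℤ) := by
      intro j
      induction j with
      | zero => intro _; simp
      | succ i ih =>
        intro hle
        have ih' := ih (by omega)
        have hs := step (4+i) (by omega) (by omega)
        have htri := abs_sub_le (P ((4+i)+1)) (P (4+i)) (P 4)
        have heq : 4 + (i+1) = (4+i)+1 := by omega
        rw [heq]
        push_cast
        linarith
    have hind := ind (m-1) (by omega)
    rw [show 4 + (m-1) = m+3 by omega, abs_le] at hind
    clear step ind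
    -- anchors at the two ends
    have a0 := hPadj 0 4 h0 h4 (by rw [abs_sub_one]; unfold posN; split_ifs <;> omega)
    have a1 := hPadj 1 4 h1 h4 (by rw [abs_sub_one]; unfold posN; split_ifs <;> omega)
    have a5 := hPadj 5 4 h5 h4 (by rw [abs_sub_one]; unfold posN; split_ifs <;> omega)
    have b2 := hPadj 2 (m+3) h2 hm3 (by rw [abs_sub_one]; unfold posN; split_ifs <;> omega)
    have b3 := hPadj 3 (m+3) h3 hm3 (by rw [abs_sub_one]; unfold posN; split_ifs <;> omega)
    have b5 := hPadj (m+2) (m+3) hm2' hm3 (by rw [abs_sub_one]; unfold posN; split_ifs <;> omega)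
    rw [abs_sub_one] at a0 a1 a5 b2 b3 b5
    have A1 : P 4 = 0 ∨ P 4 = (n:ℤ) - 1 :=
      anchorZ a0 a1 a5 (hPinj 0 1 h0 h1 (by omega)) (hPinj 0 5 h0 h5 (by omega))
        (hPinj 1 5 h1 h5 (by omega)) r4
    have A2 : P (m+3) = 0 ∨ P (m+3) = (n:ℤ) - 1 :=
      anchorZ b2 b3 b5 (hPinj 2 3 h2 h3 (by omega)) (hPinj 2 (m+2) h2 hm2' (by omega))
        (hPinj 3 (m+2) h3 hm2' (by omega)) rm3
    have k4e := hPinj 4 (m+3) h4 hm3 (by omega)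
    clear a0 a1 a5 b2 b3 b5
    omega

/-- For `m ≠ n` (both at least 1), `I_m` is not an induced subgraph of
`I_n`; consequently the family `{I_n | n ≥ 1}` is an infinite antichain under the
induced subgraph relation. -/
theorem stmt5 :
    (∀ m n : ℕ, 1 ≤ m → 1 ≤ n → m ≠ n → ¬ IsIndSubgraph (IgraphF m) (IgraphF n)) ∧
    {G : FinGraph | ∃ n, 1 ≤ n ∧ G = IgraphF n}.Infinite ∧
    IsGraphAntichain {G : FinGraph | ∃ n, 1 ≤ n ∧ G = IgraphF n} := by
  refine ⟨fun m n hm hn hmn => not_emb hm hn hmn, ?_, ?_⟩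
  · have hset : {G : FinGraph | ∃ n, 1 ≤ n ∧ G = IgraphF n} = IgraphF '' Set.Ici 1 := by
      ext G
      simp only [Set.mem_setOf_eq, Set.mem_image, Set.mem_Ici]
      exact ⟨fun ⟨n, hn, h⟩ => ⟨n, hn, h.symm⟩, fun ⟨n, hn, h⟩ => ⟨n, hn, h.symm⟩⟩
    rw [hset]
    refine Set.Infinite.image ?_ (Set.Ici_infinite 1)
    intro a _ b _ h
    have : a + 4 = b + 4 := congrArg Sigma.fst h
    omega
  · rintro G ⟨a, ha, rfl⟩ H ⟨b, hb, rfl⟩ hniso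
    have hab : a ≠ b := by
      rintro rfl
      exact hniso ⟨SimpleGraph.Iso.refl⟩
    exact not_emb ha hb hab
end

section
/- For natural numbers m ≠ n with m, n ≥ 3, the graph J_m is not an induced subgraph of the graph J_n; consequently the family {J_n | n ≥ 3} is an infinite antichain under the induced subgraph relation. -/
open SimpleGraph

/-- Vertices of `J_n`: the `n × n` grid vertices together with, for each of the
four corners, two extra vertices. -/
abbrev JVert (n : ℕ) := (Fin n × Fin n) ⊕ (Fin 4 × Fin 2)

/-- The first coordinate of the `k`-th corner of the `n × n` grid (0-indexed grid). -/
def cornerFst (n : ℕ) (k : Fin 4) : ℕ := if (k : ℕ) < 2 then 0 else n - 1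

/-- The second coordinate of the `k`-th corner of the `n × n` grid (0-indexed grid). -/
def cornerSnd (n : ℕ) (k : Fin 4) : ℕ := if (k : ℕ) % 2 = 0 then 0 else n - 1

/-- The graph `J_n`: the `n × n` grid (two grid vertices are adjacent iff their
coordinates differ by 1 in exactly one component), where at each of the four corners
we add two new vertices adjacent to each other and to that corner, so that each
corner lies in a triangle. -/
def Jgraph (n : ℕ) : SimpleGraph (JVert n) :=
  SimpleGraph.fromRel (fun a b =>
    match a, b with
    | Sum.inl p, Sum.inl q =>
        ((p.1 : ℕ) = (q.1 : ℕ) ∧ (p.2 : ℕ) + 1 = (q.2 : ℕ)) ∨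
        ((p.2 : ℕ) = (q.2 : ℕ) ∧ (p.1 : ℕ) + 1 = (q.1 : ℕ))
    | Sum.inl p, Sum.inr c =>
        (p.1 : ℕ) = cornerFst n c.1 ∧ (p.2 : ℕ) = cornerSnd n c.1
    | Sum.inr _, Sum.inl _ => False
    | Sum.inr c, Sum.inr c' => c.1 = c'.1)

/-- Renaming of the vertices of `J_n` to an initial segment of ℕ. -/
def JEquiv (n : ℕ) : JVert n ≃ Fin (n * n + 8) :=
  ((Equiv.sumCongr finProdFinEquiv finProdFinEquiv).trans finSumFinEquiv).trans
    (finCongr (by norm_num))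

/-- `J_n` as a finite graph. -/
def JgraphF (n : ℕ) : FinGraph := ⟨n * n + 8, (Jgraph n).map (JEquiv n).toEmbedding⟩


namespace Stmt6Aux

/-- Potential function: a coordinate (first if `b`, second otherwise) of a vertex of `J_n`,
with the extra vertices getting the coordinate of their corner. -/
def phi (n : ℕ) (b : Bool) : JVert n → ℤ
  | Sum.inl p => if b then ((p.1 : ℕ) : ℤ) else ((p.2 : ℕ) : ℤ)
  | Sum.inr c => if b then (cornerFst n c.1 : ℤ) else (cornerSnd n c.1 : ℤ)

lemma phi_adj {n : ℕ} {b : Bool} {x y : JVert n} (h : (Jgraph n).Adj x y) :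
    |phi n b x - phi n b y| ≤ 1 := by
  rw [abs_le]
  rw [Jgraph, fromRel_adj] at h
  obtain ⟨-, h⟩ := h
  rcases x with p | c <;> rcases y with q | c' <;> simp only [phi] <;> simp at h
  · cases b <;> simp <;> omega
  · obtain ⟨h1, h2⟩ := h; cases b <;> simp [h1, h2]
  · obtain ⟨h1, h2⟩ := h; cases b <;> simp [h1, h2]
  · have : c.1 = c'.1 := by tauto
    rw [this]; cases b <;> simp

lemma walk_bound {V : Type*} {G : SimpleGraph V} (φ : V → ℤ)
    (h : ∀ x y, G.Adj x y → |φ x - φ y| ≤ 1) {u v : V} (w : G.Walk u v) :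
    |φ u - φ v| ≤ w.length := by
  induction w with
  | nil => simp
  | @cons a b c hab p ih =>
      calc |φ a - φ c| ≤ |φ a - φ b| + |φ b - φ c| := abs_sub_le _ _ _
        _ ≤ 1 + p.length := add_le_add (h a b hab) ih
        _ = (p.cons hab).length := by simp [SimpleGraph.Walk.length_cons]; ring

/-- `v` belongs to the triangle attached at corner `k`. -/
def InTri (n : ℕ) (k : Fin 4) (v : JVert n) : Prop :=
  (∃ p : Fin n × Fin n, v = Sum.inl p ∧ (p.1 : ℕ) = cornerFst n k ∧ (p.2 : ℕ) = cornerSnd n k) ∨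
  (∃ i : Fin 2, v = Sum.inr (k, i))

lemma adj_inr {n : ℕ} {w : JVert n} {c : Fin 4 × Fin 2}
    (h : (Jgraph n).Adj w (Sum.inr c)) : InTri n c.1 w := by
  rw [Jgraph, fromRel_adj] at h
  obtain ⟨-, h⟩ := h
  rcases w with p | c'
  · simp at h
    exact Or.inl ⟨p, rfl, h.1, h.2⟩
  · simp at h
    have : c'.1 = c.1 := by tauto
    exact Or.inr ⟨c'.2, by rw [← this]⟩

lemma no_grid_triangle {n : ℕ} {p q r : Fin n × Fin n}
    (h1 : (Jgraph n).Adj (Sum.inl p) (Sum.inl q))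
    (h2 : (Jgraph n).Adj (Sum.inl q) (Sum.inl r))
    (h3 : (Jgraph n).Adj (Sum.inl p) (Sum.inl r)) : False := by
  rw [Jgraph, fromRel_adj] at h1 h2 h3
  obtain ⟨-, h1⟩ := h1; obtain ⟨-, h2⟩ := h2; obtain ⟨-, h3⟩ := h3
  simp at h1 h2 h3
  omega

lemma triangle_class {n : ℕ} {x y z : JVert n}
    (hxy : (Jgraph n).Adj x y) (hyz : (Jgraph n).Adj y z) (hxz : (Jgraph n).Adj x z) :
    ∃ k, InTri n k x ∧ InTri n k y ∧ InTri n k z := by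
  rcases z with p | c
  · rcases y with q | c
    · rcases x with r | c
      · exact absurd hxy (by intro _; exact no_grid_triangle hxy hyz hxz)
      · exact ⟨c.1, Or.inr ⟨c.2, by simp⟩, adj_inr hxy.symm, adj_inr hxz.symm⟩
    · exact ⟨c.1, adj_inr hxy, Or.inr ⟨c.2, by simp⟩, adj_inr hyz.symm⟩
  · exact ⟨c.1, adj_inr hxz, adj_inr hyz, Or.inr ⟨c.2, by simp⟩⟩

lemma inTri_phi {n : ℕ} {k : Fin 4} {v : JVert n} (h : InTri n k v) (b : Bool) :
    phi n b v = if b then (cornerFst n k : ℤ) else (cornerSnd n k : ℤ) := by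
  rcases h with ⟨p, rfl, h1, h2⟩ | ⟨i, rfl⟩
  · cases b <;> simp [phi, h1, h2]
  · cases b <;> simp [phi]

lemma cornerFst_lt {n : ℕ} (hn : 0 < n) (k : Fin 4) : cornerFst n k < n := by
  unfold cornerFst; split <;> omega

lemma cornerSnd_lt {n : ℕ} (hn : 0 < n) (k : Fin 4) : cornerSnd n k < n := by
  unfold cornerSnd; split <;> omega

/-- The triangle at corner `k`, as a finset. -/
def triF (n : ℕ) (hn : 0 < n) (k : Fin 4) : Finset (JVert n) :=
  { Sum.inl (⟨cornerFst n k, cornerFst_lt hn k⟩, ⟨cornerSnd n k, cornerSnd_lt hn k⟩),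
    Sum.inr (k, 0), Sum.inr (k, 1) }

lemma mem_triF {n : ℕ} (hn : 0 < n) {k : Fin 4} {v : JVert n} (h : InTri n k v) :
    v ∈ triF n hn k := by
  rcases h with ⟨p, rfl, h1, h2⟩ | ⟨i, rfl⟩
  · simp only [triF, Finset.mem_insert, Finset.mem_singleton]
    left
    simp [Prod.ext_iff, Fin.ext_iff, h1, h2]
  · fin_cases i <;> simp [triF]

lemma triF_card {n : ℕ} (hn : 0 < n) (k : Fin 4) : (triF n hn k).card ≤ 3 := by
  unfold triF
  refine (Finset.card_insert_le _ _).trans ?_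
  refine Nat.add_le_add_right ((Finset.card_insert_le _ _).trans ?_) 1
  simp

lemma adj_c0 {m : ℕ} (hm : 0 < m) (i : Fin 2) :
    (Jgraph m).Adj (Sum.inl (⟨0, hm⟩, ⟨0, hm⟩)) (Sum.inr (0, i)) := by
  rw [Jgraph, fromRel_adj]
  exact ⟨by simp, Or.inl ⟨by simp [cornerFst], by simp [cornerSnd]⟩⟩

lemma adj_c1 {m : ℕ} (hm : 0 < m) (hm1 : m - 1 < m) (i : Fin 2) :
    (Jgraph m).Adj (Sum.inl (⟨0, hm⟩, ⟨m - 1, hm1⟩)) (Sum.inr (1, i)) := by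
  rw [Jgraph, fromRel_adj]
  exact ⟨by simp, Or.inl ⟨by simp [cornerFst], by simp [cornerSnd]⟩⟩

lemma adj_extras {m : ℕ} (k : Fin 4) :
    (Jgraph m).Adj (Sum.inr (k, 0)) (Sum.inr (k, 1)) := by
  rw [Jgraph, fromRel_adj]
  exact ⟨by simp, Or.inl rfl⟩

lemma adj_step {m : ℕ} {j : ℕ} (hj : j + 1 < m) :
    (Jgraph m).Adj (Sum.inl (⟨0, by omega⟩, ⟨j, by omega⟩))
      (Sum.inl (⟨0, by omega⟩, ⟨j + 1, hj⟩)) := by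
  rw [Jgraph, fromRel_adj]
  exact ⟨by simp [Fin.ext_iff], Or.inl (Or.inl ⟨rfl, rfl⟩)⟩

lemma walk_exists {m : ℕ} (hm : 0 < m) :
    ∀ j : ℕ, ∀ hj : j < m, ∃ w : (Jgraph m).Walk (Sum.inl (⟨0, hm⟩, ⟨0, hm⟩))
      (Sum.inl (⟨0, hm⟩, ⟨j, hj⟩)), w.length = j := by
  intro j
  induction j with
  | zero => exact fun hj => ⟨SimpleGraph.Walk.nil, rfl⟩
  | succ j ih =>
      intro hj
      obtain ⟨w, hw⟩ := ih (by omega)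
      exact ⟨w.concat (adj_step hj), by simp [SimpleGraph.Walk.length_concat, hw]⟩

lemma corner_vals_fst {n : ℕ} (k : Fin 4) : cornerFst n k = 0 ∨ cornerFst n k = n - 1 := by
  unfold cornerFst; split <;> simp

lemma corner_vals_snd {n : ℕ} (k : Fin 4) : cornerSnd n k = 0 ∨ cornerSnd n k = n - 1 := by
  unfold cornerSnd; split <;> simp

lemma corner_ne {n : ℕ} (hn : 3 ≤ n) {k k' : Fin 4} (h : k ≠ k') :
    cornerFst n k ≠ cornerFst n k' ∨ cornerSnd n k ≠ cornerSnd n k' := by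
  fin_cases k <;> fin_cases k' <;> simp_all [cornerFst, cornerSnd] <;> omega

lemma key_lt {m n : ℕ} (hm : 3 ≤ m) (hmn : m < n) (f : Jgraph m ↪g Jgraph n) : False := by
  have hm0 : 0 < m := by omega
  have hn0 : 0 < n := by omega
  have hn3 : 3 ≤ n := by omega
  have hm1 : m - 1 < m := by omega
  set c0 : JVert m := Sum.inl (⟨0, hm0⟩, ⟨0, hm0⟩) with hc0
  set c1 : JVert m := Sum.inl (⟨0, hm0⟩, ⟨m - 1, hm1⟩) with hc1
  -- the two corner triangles of J_m
  obtain ⟨k0, ht0x, ht0a, ht0b⟩ := triangle_class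
    (f.map_rel_iff.mpr (adj_c0 hm0 0)) (f.map_rel_iff.mpr (adj_extras 0))
    (f.map_rel_iff.mpr (adj_c0 hm0 1))
  obtain ⟨k1, ht1x, ht1a, ht1b⟩ := triangle_class
    (f.map_rel_iff.mpr (adj_c1 hm0 hm1 0)) (f.map_rel_iff.mpr (adj_extras 1))
    (f.map_rel_iff.mpr (adj_c1 hm0 hm1 1))
  -- the two triangles land at distinct corners of J_n
  have hk : k0 ≠ k1 := by
    rintro rfl
    have hsub : ({f c0, f (Sum.inr (0, 0)), f (Sum.inr (0, 1))} : Finset (JVert n))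
        ⊆ triF n hn0 k0 := by
      intro v hv
      simp only [Finset.mem_insert, Finset.mem_singleton] at hv
      rcases hv with rfl | rfl | rfl
      · exact mem_triF hn0 ht0x
      · exact mem_triF hn0 ht0a
      · exact mem_triF hn0 ht0b
    have hcard : ({f c0, f (Sum.inr (0, 0)), f (Sum.inr (0, 1))} : Finset (JVert n)).card = 3 := by
      rw [Finset.card_insert_of_notMem, Finset.card_insert_of_notMem, Finset.card_singleton]
      · simp only [Finset.mem_singleton]
        intro h; exact absurd (f.injective h) (by simp [Prod.ext_iff, Fin.ext_iff])
      · simp only [Finset.mem_insert, Finset.mem_singleton]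
        rintro (h | h) <;> exact absurd (f.injective h) (by simp [hc0])
    have heq : ({f c0, f (Sum.inr (0, 0)), f (Sum.inr (0, 1))} : Finset (JVert n))
        = triF n hn0 k0 :=
      Finset.eq_of_subset_of_card_le hsub (by rw [hcard]; exact triF_card hn0 k0)
    have : f c1 ∈ ({f c0, f (Sum.inr (0, 0)), f (Sum.inr (0, 1))} : Finset (JVert n)) := by
      rw [heq]; exact mem_triF hn0 ht1x
    simp only [Finset.mem_insert, Finset.mem_singleton] at this
    rcases this with h | h | h <;>
      exact absurd (f.injective h) (by simp [hc0, hc1, Prod.ext_iff, Fin.ext_iff] <;> omega)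
  -- walk of length m - 1 from c0 to c1 in J_m, mapped into J_n
  obtain ⟨w, hw⟩ := walk_exists hm0 (m - 1) hm1
  have hb : ∀ b : Bool, |phi n b (f c0) - phi n b (f c1)| ≤ (m - 1 : ℕ) := by
    intro b
    have := walk_bound (phi n b) (fun _ _ h => phi_adj h) (w.map f.toHom)
    rwa [SimpleGraph.Walk.length_map, hw] at this
  rcases corner_ne hn3 hk with hne | hne
  · have h0 : phi n true (f c0) = (cornerFst n k0 : ℤ) := by simpa using inTri_phi ht0x true
    have h1 : phi n true (f c1) = (cornerFst n k1 : ℤ) := by simpa using inTri_phi ht1x true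
    have hB := hb true
    rw [h0, h1, abs_le] at hB
    rcases corner_vals_fst (n := n) k0 with h | h <;>
      rcases corner_vals_fst (n := n) k1 with h' | h' <;> omega
  · have h0 : phi n false (f c0) = (cornerSnd n k0 : ℤ) := by simpa using inTri_phi ht0x false
    have h1 : phi n false (f c1) = (cornerSnd n k1 : ℤ) := by simpa using inTri_phi ht1x false
    have hB := hb false
    rw [h0, h1, abs_le] at hB
    rcases corner_vals_snd (n := n) k0 with h | h <;>
      rcases corner_vals_snd (n := n) k1 with h' | h' <;> omega

lemma key (m n : ℕ) (hm : 3 ≤ m) (hn : 3 ≤ n) (hmn : m ≠ n) :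
    ¬ Nonempty (Jgraph m ↪g Jgraph n) := by
  rintro ⟨f⟩
  rcases lt_or_gt_of_ne hmn with h | h
  · exact key_lt hm h f
  · have hcard := Fintype.card_le_of_injective f f.injective
    simp only [Fintype.card_sum, Fintype.card_prod, Fintype.card_fin] at hcard
    nlinarith

end Stmt6Aux

/-- For `m ≠ n` (both at least 3), `J_m` is not an induced subgraph of
`J_n`; consequently the family `{J_n | n ≥ 3}` is an infinite antichain under the
induced subgraph relation. -/
theorem stmt6 :
    (∀ m n : ℕ, 3 ≤ m → 3 ≤ n → m ≠ n → ¬ Nonempty (Jgraph m ↪g Jgraph n)) ∧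
    {G : FinGraph | ∃ n, 3 ≤ n ∧ G = JgraphF n}.Infinite ∧
    IsGraphAntichain {G : FinGraph | ∃ n, 3 ≤ n ∧ G = JgraphF n} := by
  refine ⟨Stmt6Aux.key, ?_, ?_⟩
  · apply Set.infinite_of_injective_forall_mem (f := fun k : ℕ => JgraphF (k + 3))
    · intro a b h
      have := congrArg Sigma.fst h
      simp only [JgraphF] at this
      nlinarith
    · intro a
      exact ⟨a + 3, by omega, rfl⟩
  · rintro G ⟨a, ha, rfl⟩ H ⟨b, hb, rfl⟩ hniso ⟨e⟩
    have hab : a ≠ b := by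
      rintro rfl
      exact hniso ⟨RelIso.refl _⟩
    refine Stmt6Aux.key a b ha hb hab
      ⟨((Iso.map (JEquiv b) (Jgraph b)).symm.toEmbedding.comp e).comp
        (Iso.map (JEquiv a) (Jgraph a)).toEmbedding⟩
end

section
/- For every n ≥ 9 and every x ∈ {1,...,n}: x is odd if and only if there exist pairwise distinct vertices y, z, w ∈ {1,...,n} (all distinct from x) such that {x,y}, {x,z}, {x,w}, {y,z} and {y,w} are edges of D_n while {z,w} is not an edge of D_n. -/
open SimpleGraph

/-- Vertices of the graph `D_n`: the integers `1, …, n`. -/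
abbrev DVert (n : ℕ) := {i : ℕ // 1 ≤ i ∧ i ≤ n}

/-- The power graph `D_n` on vertex set `{1, …, n}`: two distinct vertices `i`, `j` are
adjacent iff `|i − j| = 1` (a path edge) or the 2-adic valuations of `i` and `j` agree
(a clique edge).  Here `padicValNat 2 i` is the largest `k` with `2^k ∣ i`. -/
def Dgraph (n : ℕ) : SimpleGraph (DVert n) :=
  SimpleGraph.fromRel (fun x y =>
    (x : ℕ) + 1 = (y : ℕ) ∨ padicValNat 2 (x : ℕ) = padicValNat 2 (y : ℕ))

lemma vOdd (m : ℕ) (h : Odd m) : padicValNat 2 m = 0 := by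
  apply padicValNat.eq_zero_of_not_dvd
  obtain ⟨k, hk⟩ := h
  rintro ⟨j, hj⟩; omega

lemma vTwoDvd (m : ℕ) (hm : m ≠ 0) (k : ℕ) (h : 2 ^ k ∣ m) : k ≤ padicValNat 2 m := by
  rw [← Nat.factorization_def m Nat.prime_two]
  exact (Nat.Prime.pow_dvd_iff_le_factorization Nat.prime_two hm).mp h

lemma vEven (m : ℕ) (hm : m ≠ 0) (h : 2 ∣ m) : 1 ≤ padicValNat 2 m := by
  simpa using vTwoDvd m hm 1 (by simpa using h)

lemma vOne (m : ℕ) (hm : m ≠ 0) (h : 2 ∣ m) (h4 : ¬ 4 ∣ m) : padicValNat 2 m = 1 := by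
  have h1 := vEven m hm h
  have h2 : padicValNat 2 m < 2 := by
    by_contra hc
    have h4d : (4:ℕ) ∣ 2 ^ padicValNat 2 m := by
      have : (2:ℕ)^2 ∣ 2 ^ padicValNat 2 m := pow_dvd_pow 2 (by omega)
      simpa using this
    exact h4 (dvd_trans h4d pow_padicValNat_dvd)
  omega

lemma vGe2 (m : ℕ) (hm : m ≠ 0) (h : 4 ∣ m) : 2 ≤ padicValNat 2 m :=
  vTwoDvd m hm 2 (by simpa using h)

/-- key: two even numbers differing by 2 have different valuations. -/
lemma vStep (a : ℕ) (ha : a ≠ 0) (h2 : 2 ∣ a) :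
    padicValNat 2 a ≠ padicValNat 2 (a + 2) := by
  by_cases h4 : 4 ∣ a
  · have := vGe2 a ha h4
    have h4' : ¬ 4 ∣ (a + 2) := by omega
    rw [vOne (a+2) (by omega) (by omega) h4']
    omega
  · rw [vOne a ha h2 h4]
    have : 4 ∣ a + 2 := by omega
    have := vGe2 (a+2) (by omega) this
    omega

lemma keyBack (x y z w : ℕ) (hx1 : 1 ≤ x) (hy1 : 1 ≤ y) (hw1 : 1 ≤ w)
    (hx2 : 2 ∣ x)
    (hz : z + 1 = x ∨ x + 1 = z)
    (hxy : x ≠ y) (hxw : x ≠ w) (hyz : y ≠ z)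
    (haxy : x + 1 = y ∨ y + 1 = x ∨ padicValNat 2 x = padicValNat 2 y)
    (haxw : x + 1 = w ∨ w + 1 = x ∨ padicValNat 2 x = padicValNat 2 w)
    (hayz : y + 1 = z ∨ z + 1 = y ∨ padicValNat 2 y = padicValNat 2 z)
    (hayw : y + 1 = w ∨ w + 1 = y ∨ padicValNat 2 y = padicValNat 2 w)
    (hzwv : padicValNat 2 z ≠ padicValNat 2 w) : False := by
  have hzodd : Odd z := by rw [Nat.odd_iff]; omega
  have hvz : padicValNat 2 z = 0 := vOdd z hzodd
  have hvx : 1 ≤ padicValNat 2 x := vEven x (by omega) hx2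
  -- w must be a clique neighbor of x
  have hvw : padicValNat 2 x = padicValNat 2 w := by
    rcases haxw with h | h | h
    · exact absurd (vOdd w (by rw [Nat.odd_iff]; omega)) (by omega)
    · exact absurd (vOdd w (by rw [Nat.odd_iff]; omega)) (by omega)
    · exact h
  have hw2 : 2 ∣ w := by
    by_contra hodd
    have := vOdd w (Nat.odd_iff.mpr (by omega))
    omega
  rcases Nat.even_or_odd y with hy | hy
  · -- y even: forced y = x ± 2 with same valuation
    have hvy : 1 ≤ padicValNat 2 y := vEven y (by omega) hy.two_dvd
    have hy' : y + 1 = z ∨ z + 1 = y := by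
      rcases hayz with h | h | h
      · exact Or.inl h
      · exact Or.inr h
      · omega
    -- so y ∈ {x-2, x, x+2}, y ≠ x, y even, z = x±1
    have hyval : y + 2 = x ∨ y = x + 2 := by
      rcases hy with ⟨m, hm⟩; omega
    have hvxy : padicValNat 2 x = padicValNat 2 y := by
      rcases haxy with h | h | h
      · omega
      · omega
      · exact h
    rcases hyval with h | h
    · exact vStep y (by omega) hy.two_dvd (by rw [← h] at hvxy; omega)
    · exact vStep x (by omega) hx2 (by rw [h] at hvxy; omega)
  · -- y odd
    have hvy : padicValNat 2 y = 0 := vOdd y hy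
    have hy' : x + 1 = y ∨ y + 1 = x := by
      rcases haxy with h | h | h
      · exact Or.inl h
      · exact Or.inr h
      · omega
    have hw' : y + 1 = w ∨ w + 1 = y := by
      rcases hayw with h | h | h
      · exact Or.inl h
      · exact Or.inr h
      · omega
    -- w ∈ {x-2, x, x+2}, w even, w ≠ x
    have hwval : w + 2 = x ∨ w = x + 2 := by omega
    rcases hwval with h | h
    · exact vStep w (by omega) hw2 (by rw [show w + 2 = x from h]; omega)
    · exact vStep x (by omega) hx2 (by rw [← h]; omega)

open SimpleGraph in
lemma adjIff {n : ℕ} (a b : DVert n) :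
    (Dgraph n).Adj a b ↔ (a : ℕ) ≠ b ∧
      ((a : ℕ) + 1 = b ∨ (b : ℕ) + 1 = a ∨
        padicValNat 2 (a : ℕ) = padicValNat 2 (b : ℕ)) := by
  rw [Dgraph, fromRel_adj]
  constructor
  · rintro ⟨h1, h2⟩
    refine ⟨Subtype.coe_ne_coe.mpr h1, ?_⟩
    rcases h2 with (h | h) | (h | h)
    exacts [Or.inl h, Or.inr (Or.inr h), Or.inr (Or.inl h), Or.inr (Or.inr h.symm)]
  · rintro ⟨h1, h2⟩
    refine ⟨Subtype.coe_ne_coe.mp h1, ?_⟩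
    rcases h2 with h | h | h
    exacts [Or.inl (Or.inl h), Or.inr (Or.inl h), Or.inl (Or.inr h)]


/-- For every `n ≥ 9` and every vertex `x` of `D_n`: `x` is odd iff
there exist pairwise distinct vertices `y, z, w`, all distinct from `x`, such that
`xy`, `xz`, `xw`, `yz`, `yw` are edges of `D_n` but `zw` is not. -/
theorem stmt8 (n : ℕ) (hn : 9 ≤ n) (x : DVert n) :
    Odd (x : ℕ) ↔
      ∃ y z w : DVert n,
        x ≠ y ∧ x ≠ z ∧ x ≠ w ∧ y ≠ z ∧ y ≠ w ∧ z ≠ w ∧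
        (Dgraph n).Adj x y ∧ (Dgraph n).Adj x z ∧ (Dgraph n).Adj x w ∧
        (Dgraph n).Adj y z ∧ (Dgraph n).Adj y w ∧ ¬ (Dgraph n).Adj z w := by
  obtain ⟨hx1, hxn⟩ := x.2
  constructor
  · intro hxodd
    have hxv : padicValNat 2 (x : ℕ) = 0 := vOdd _ hxodd
    obtain ⟨m, hm⟩ := hxodd
    by_cases hcase : (x : ℕ) + 2 ≤ n
    · -- use y = x+2, z = x+1, w = 1 or 9
      obtain ⟨wv, hwodd, hw1, hwn, hne1, hne2, hne3⟩ :
          ∃ wv, Odd wv ∧ 1 ≤ wv ∧ wv ≤ n ∧ wv ≠ (x:ℕ) ∧ wv ≠ (x:ℕ)+1 ∧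
            wv ≠ (x:ℕ)+2 := by
        by_cases h5 : (x : ℕ) ≤ 5
        · exact ⟨9, ⟨4, rfl⟩, by omega, by omega, by omega, by omega, by omega⟩
        · exact ⟨1, ⟨0, rfl⟩, by omega, by omega, by omega, by omega, by omega⟩
      refine ⟨⟨(x:ℕ)+2, by omega⟩, ⟨(x:ℕ)+1, by omega⟩, ⟨wv, hw1, hwn⟩,
        ?_, ?_, ?_, ?_, ?_, ?_, ?_, ?_, ?_, ?_, ?_, ?_⟩
      · exact Subtype.coe_ne_coe.mp (by simp <;> omega)
      · exact Subtype.coe_ne_coe.mp (by simp <;> omega)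
      · exact Subtype.coe_ne_coe.mp (by simp <;> omega)
      · exact Subtype.coe_ne_coe.mp (by simp <;> omega)
      · exact Subtype.coe_ne_coe.mp (by simp <;> omega)
      · exact Subtype.coe_ne_coe.mp (by simp <;> omega)
      · exact (adjIff _ _).mpr ⟨by simp <;> omega,
          Or.inr (Or.inr (by rw [hxv, vOdd ((x:ℕ)+2) ⟨m+1, by omega⟩]))⟩
      · exact (adjIff _ _).mpr ⟨by simp <;> omega, Or.inl rfl⟩
      · exact (adjIff _ _).mpr ⟨by simp <;> omega,
          Or.inr (Or.inr (by rw [hxv, vOdd wv hwodd]))⟩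
      · exact (adjIff _ _).mpr ⟨by simp <;> omega, Or.inr (Or.inl rfl)⟩
      · exact (adjIff _ _).mpr ⟨by simp <;> omega,
          Or.inr (Or.inr (by rw [vOdd ((x:ℕ)+2) ⟨m+1, by omega⟩, vOdd wv hwodd]))⟩
      · rw [adjIff]
        rintro ⟨h1, h2 | h2 | h2⟩
        · simp at h2; omega
        · simp at h2; omega
        · have := vEven ((x:ℕ)+1) (by omega) (by omega)
          rw [vOdd wv hwodd] at h2; simp at h2; omega
    · -- x near the top: use y = x-2, z = x-1, w = 1
      have hx8 : 8 ≤ (x : ℕ) := by omega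
      refine ⟨⟨(x:ℕ)-2, by omega⟩, ⟨(x:ℕ)-1, by omega⟩, ⟨1, by omega⟩,
        ?_, ?_, ?_, ?_, ?_, ?_, ?_, ?_, ?_, ?_, ?_, ?_⟩
      · exact Subtype.coe_ne_coe.mp (by simp <;> omega)
      · exact Subtype.coe_ne_coe.mp (by simp <;> omega)
      · exact Subtype.coe_ne_coe.mp (by simp <;> omega)
      · exact Subtype.coe_ne_coe.mp (by simp <;> omega)
      · exact Subtype.coe_ne_coe.mp (by simp <;> omega)
      · exact Subtype.coe_ne_coe.mp (by simp <;> omega)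
      · exact (adjIff _ _).mpr ⟨by simp <;> omega,
          Or.inr (Or.inr (by rw [hxv, vOdd ((x:ℕ)-2) ⟨m-1, by omega⟩]))⟩
      · exact (adjIff _ _).mpr ⟨by simp <;> omega, Or.inr (Or.inl (by simp <;> omega))⟩
      · exact (adjIff _ _).mpr ⟨by simp <;> omega,
          Or.inr (Or.inr (by rw [hxv, vOdd 1 ⟨0, rfl⟩]))⟩
      · exact (adjIff _ _).mpr ⟨by simp <;> omega, Or.inl (by simp <;> omega)⟩
      · exact (adjIff _ _).mpr ⟨by simp <;> omega,
          Or.inr (Or.inr (by rw [vOdd ((x:ℕ)-2) ⟨m-1, by omega⟩, vOdd 1 ⟨0, rfl⟩]))⟩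
      · rw [adjIff]
        rintro ⟨h1, h2 | h2 | h2⟩
        · simp at h2; omega
        · simp at h2; omega
        · have := vEven ((x:ℕ)-1) (by omega) (by omega)
          rw [vOdd 1 ⟨0, rfl⟩] at h2; simp at h2; omega
  · rintro ⟨y, z, w, hxy, hxz, hxw, hyz, hyw, hzw, axy, axz, axw, ayz, ayw, nazw⟩
    by_contra hodd
    have hx2 : 2 ∣ (x : ℕ) := by
      rcases Nat.even_or_odd (x:ℕ) with h | h
      · exact h.two_dvd
      · exact absurd h hodd
    rw [adjIff] at axy axz axw ayz ayw
    obtain ⟨exy, axy⟩ := axy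
    obtain ⟨exz, axz⟩ := axz
    obtain ⟨exw, axw⟩ := axw
    obtain ⟨eyz, ayz⟩ := ayz
    obtain ⟨eyw, ayw⟩ := ayw
    have hzw' : ¬((z:ℕ) + 1 = w ∨ (w:ℕ) + 1 = z ∨
        padicValNat 2 (z:ℕ) = padicValNat 2 (w:ℕ)) := by
      intro h
      exact nazw ((adjIff _ _).mpr ⟨Subtype.coe_ne_coe.mpr hzw, h⟩)
    push_neg at hzw'
    obtain ⟨hzw1, hzw2, hzwv⟩ := hzw'
    -- at least one of z, w is a path neighbor of x
    have hpath : ((z:ℕ) + 1 = x ∨ (x:ℕ) + 1 = z) ∨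
        ((w:ℕ) + 1 = x ∨ (x:ℕ) + 1 = w) := by
      rcases axz with h | h | h
      · exact Or.inl (Or.inr h)
      · exact Or.inl (Or.inl h)
      · rcases axw with h' | h' | h'
        · exact Or.inr (Or.inr h')
        · exact Or.inr (Or.inl h')
        · exact absurd (h ▸ h' ▸ rfl) hzwv
    rcases hpath with h | h
    · exact keyBack (x:ℕ) (y:ℕ) (z:ℕ) (w:ℕ) x.2.1 y.2.1 w.2.1 hx2 h
        exy exw eyz axy axw ayz ayw hzwv
    · exact keyBack (x:ℕ) (y:ℕ) (w:ℕ) (z:ℕ) x.2.1 y.2.1 z.2.1 hx2 h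
        exy exz eyw axy axz ayw ayz (Ne.symm hzwv)
end

section
/- For every even n ≥ 10, the graph D_n is rigid: every graph automorphism of D_n is the identity map. -/
/-!
Degrees separate the vertices. An odd vertex is adjacent to every other odd vertex and to at
least one path neighbour, so it has at least n/2 neighbours, whereas an even vertex has at most
n/4 + 2: numbers with the same positive 2-adic valuation are congruent mod 4. Hence every
automorphism preserves parity. As n is even, every odd vertex other than 1 has two path
neighbours, so 1 is the only odd vertex of minimal degree and is fixed. Finally, if a
parity-preserving automorphism fixes 1, …, k, then it fixes k + 1, which is the only neighbour
of k of the opposite parity other than k − 1.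
-/

open SimpleGraph

instance (n : ℕ) : Finite (DVert n) := (Set.finite_Icc 1 n).to_subtype

theorem mod_two_eq_of_padicValNat_eq {x y : ℕ} (hx : x ≠ 0) (hy : y ≠ 0)
    (h : padicValNat 2 x = padicValNat 2 y) : x % 2 = y % 2 := by
  have hx2 := padicValNat_dvd_iff_le (p := 2) (n := 1) hx
  have hy2 := padicValNat_dvd_iff_le (p := 2) (n := 1) hy
  rw [pow_one] at hx2 hy2
  omega

theorem mod_four_eq_of_padicValNat_eq {x y : ℕ} (hx : x ≠ 0) (hy : y ≠ 0)
    (h : padicValNat 2 x = padicValNat 2 y) (h0 : padicValNat 2 x ≠ 0) : x % 4 = y % 4 := by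
  have hx2 := padicValNat_dvd_iff_le (p := 2) (n := 1) hx
  have hy2 := padicValNat_dvd_iff_le (p := 2) (n := 1) hy
  have hx4 := padicValNat_dvd_iff_le (p := 2) (n := 2) hx
  have hy4 := padicValNat_dvd_iff_le (p := 2) (n := 2) hy
  norm_num at hx2 hy2 hx4 hy4
  omega

theorem SimpleGraph.Iso.ncard_neighborSet_map {V W : Type*} {G : SimpleGraph V}
    {G' : SimpleGraph W} (φ : G ≃g G') (v : V) :
    (G'.neighborSet (φ v)).ncard = (G.neighborSet v).ncard :=
  (Set.ncard_congr' (φ.mapNeighborSet v)).symm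

namespace Dgraph

variable {n : ℕ}

theorem adj_iff {x y : DVert n} :
    (Dgraph n).Adj x y ↔ x ≠ y ∧ (x.1 + 1 = y.1 ∨ y.1 + 1 = x.1 ∨
      padicValNat 2 x.1 = padicValNat 2 y.1) := by
  rw [Dgraph, fromRel_adj]
  constructor
  · rintro ⟨hne, (h | h) | (h | h)⟩ <;> simp_all
  · rintro ⟨hne, h | h | h⟩ <;> simp_all

theorem adj_of_succ_eq {x y : DVert n} (h : x.1 + 1 = y.1) : (Dgraph n).Adj x y :=
  adj_iff.2 ⟨fun hxy => by subst hxy; omega, Or.inl h⟩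

theorem succ_eq_or_succ_eq_of_adj {x y : DVert n} (h : (Dgraph n).Adj x y)
    (hxy : x.1 % 2 ≠ y.1 % 2) : x.1 + 1 = y.1 ∨ y.1 + 1 = x.1 := by
  obtain ⟨-, h | h | h⟩ := adj_iff.1 h
  · exact Or.inl h
  · exact Or.inr h
  · exact absurd (mod_two_eq_of_padicValNat_eq (by omega) (by omega) h) hxy

def oddVerts (n : ℕ) : Set (DVert n) := {v | v.1 % 2 = 1}

theorem ncard_oddVerts : (oddVerts n).ncard = (n + 1) / 2 := by
  have hrange : oddVerts n =
      Set.range (fun j : Fin ((n + 1) / 2) => (⟨2 * j + 1, by omega⟩ : DVert n)) := by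
    ext v
    constructor
    · intro (hv : v.1 % 2 = 1)
      exact ⟨⟨v.1 / 2, by omega⟩, Subtype.ext (by simp only; omega)⟩
    · rintro ⟨j, rfl⟩
      simp [oddVerts]
  rw [hrange, Set.ncard_range_of_injective, Nat.card_fin]
  intro i j h
  ext
  simpa using h

theorem ncard_setOf_val_eq_le_one (a : ℕ) : {v : DVert n | v.1 = a}.ncard ≤ 1 :=
  (Set.ncard_le_one).2 fun _ hv _ hw => Subtype.ext (hv.trans hw.symm)

theorem oddVerts_sdiff_subset_neighborSet {v : DVert n} (hv : v.1 % 2 = 1) :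
    oddVerts n \ {v} ⊆ (Dgraph n).neighborSet v := by
  rintro w ⟨hw : w.1 % 2 = 1, hwv⟩
  refine adj_iff.2 ⟨Ne.symm hwv, Or.inr (Or.inr ?_)⟩
  rw [padicValNat.eq_zero_of_not_dvd (by omega), padicValNat.eq_zero_of_not_dvd (by omega)]

theorem ncard_neighborSet_le_of_even {w : DVert n} (hw : w.1 % 2 = 0) :
    ((Dgraph n).neighborSet w).ncard ≤ n / 4 + 2 := by
  set C := {x : DVert n | padicValNat 2 x.1 = padicValNat 2 w.1}
  have hC : C.ncard ≤ n / 4 + 1 := by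
    rw [← Set.ncard_Iic_nat]
    refine Set.ncard_le_ncard_of_injOn (fun x => x.1 / 4) (fun x _ => ?_) ?_
    · simp only [Set.mem_Iic]; omega
    intro x hx y hy hxy
    have h0 : padicValNat 2 x.1 ≠ 0 := by
      rw [hx]
      exact padicValNat.eq_zero_iff.not.2 (by omega)
    have := mod_four_eq_of_padicValNat_eq (by omega) (by omega) (hx.trans hy.symm) h0
    ext
    simp only at hxy
    omega
  have hsub : (Dgraph n).neighborSet w ⊆
      (C \ {w}) ∪ ({x | x.1 = w.1 - 1} ∪ {x | x.1 = w.1 + 1}) := by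
    intro x hx
    obtain ⟨hne, h | h | h⟩ := adj_iff.1 hx
    · exact Or.inr (Or.inr (by simp only [Set.mem_ofPred_eq]; omega))
    · exact Or.inr (Or.inl (by simp only [Set.mem_ofPred_eq]; omega))
    · exact Or.inl ⟨h.symm, Ne.symm hne⟩
  calc ((Dgraph n).neighborSet w).ncard
      ≤ (C \ {w}).ncard + ({x : DVert n | x.1 = w.1 - 1}.ncard
          + {x : DVert n | x.1 = w.1 + 1}.ncard) :=
        (Set.ncard_le_ncard hsub).trans <|
          (Set.ncard_union_le _ _).trans (Nat.add_le_add_left (Set.ncard_union_le _ _) _)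
    _ ≤ n / 4 + 2 := by
        have := ncard_setOf_val_eq_le_one (n := n) (w.1 - 1)
        have := ncard_setOf_val_eq_le_one (n := n) (w.1 + 1)
        rw [Set.ncard_sdiff_singleton_of_mem (show w ∈ C from rfl)]
        omega

theorem ncard_oddVerts_sub_one_add_le {v : DVert n} (hv : v.1 % 2 = 1) {P : Set (DVert n)}
    (hP : P ⊆ (Dgraph n).neighborSet v) (hP_even : ∀ w ∈ P, w.1 % 2 = 0) :
    (n + 1) / 2 - 1 + P.ncard ≤ ((Dgraph n).neighborSet v).ncard := by
  have hdisj : Disjoint (oddVerts n \ {v}) P :=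
    Set.disjoint_left.2 fun w (hw : w.1 % 2 = 1 ∧ _) hwP => by have := hP_even w hwP; omega
  calc (n + 1) / 2 - 1 + P.ncard = (oddVerts n \ {v} ∪ P).ncard := by
        rw [Set.ncard_union_eq hdisj,
          Set.ncard_sdiff_singleton_of_mem (show v ∈ oddVerts n from hv), ncard_oddVerts]
    _ ≤ ((Dgraph n).neighborSet v).ncard :=
        Set.ncard_le_ncard (Set.union_subset (oddVerts_sdiff_subset_neighborSet hv) hP)

theorem half_le_ncard_neighborSet_of_odd {v : DVert n} (hv : v.1 % 2 = 1) (hvn : v.1 < n) :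
    (n + 1) / 2 ≤ ((Dgraph n).neighborSet v).ncard := by
  have := ncard_oddVerts_sub_one_add_le hv (P := {⟨v.1 + 1, by omega⟩})
    (Set.singleton_subset_iff.2 (adj_of_succ_eq rfl)) (by rintro w rfl; simp only; omega)
  rw [Set.ncard_singleton] at this
  omega

theorem half_lt_ncard_neighborSet_of_odd {v : DVert n} (hv : v.1 % 2 = 1) (hv1 : 1 < v.1)
    (hvn : v.1 < n) : (n + 1) / 2 < ((Dgraph n).neighborSet v).ncard := by
  have := ncard_oddVerts_sub_one_add_le hv (P := {⟨v.1 - 1, by omega⟩, ⟨v.1 + 1, by omega⟩})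
    (Set.insert_subset_iff.2 ⟨(adj_of_succ_eq (by simp only; omega)).symm,
      Set.singleton_subset_iff.2 (adj_of_succ_eq rfl)⟩)
    (by rintro w (rfl | rfl) <;> simp only <;> omega)
  rw [Set.ncard_pair (by simp only [ne_eq, Subtype.mk.injEq]; omega)] at this
  omega

theorem ncard_neighborSet_le_of_val_eq_one {v : DVert n} (hv : v.1 = 1) :
    ((Dgraph n).neighborSet v).ncard ≤ (n + 1) / 2 := by
  have hsub : (Dgraph n).neighborSet v ⊆ (oddVerts n \ {v}) ∪ {x | x.1 = 2} := by
    intro x hx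
    obtain ⟨hne, h | h | h⟩ := adj_iff.1 hx
    · exact Or.inr (by simp only [Set.mem_ofPred_eq]; omega)
    · have := x.2.1
      omega
    · refine Or.inl ⟨?_, Ne.symm hne⟩
      have := mod_two_eq_of_padicValNat_eq (by omega) (by have := x.2.1; omega) h
      show x.1 % 2 = 1
      omega
  have hv1 : v ∈ oddVerts n := show v.1 % 2 = 1 by omega
  calc ((Dgraph n).neighborSet v).ncard
      ≤ (oddVerts n \ {v}).ncard + {x : DVert n | x.1 = 2}.ncard :=
        (Set.ncard_le_ncard hsub).trans (Set.ncard_union_le _ _)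
    _ ≤ (n + 1) / 2 := by
        have := ncard_setOf_val_eq_le_one (n := n) 2
        have := v.2.2
        rw [Set.ncard_sdiff_singleton_of_mem hv1, ncard_oddVerts]
        omega

theorem val_lt_of_odd (heven : Even n) {v : DVert n} (hv : v.1 % 2 = 1) : v.1 < n := by
  obtain ⟨k, hk⟩ := heven
  have := v.2.2
  omega

theorem odd_apply_of_odd (hn : 10 ≤ n) (heven : Even n) (φ : Dgraph n ≃g Dgraph n)
    {v : DVert n} (hv : v.1 % 2 = 1) : (φ v).1 % 2 = 1 := by
  by_contra h
  have hlow := half_le_ncard_neighborSet_of_odd hv (val_lt_of_odd heven hv)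
  have hup := ncard_neighborSet_le_of_even (w := φ v) (by omega)
  rw [φ.ncard_neighborSet_map] at hup
  omega

theorem apply_mod_two (hn : 10 ≤ n) (heven : Even n) (φ : Dgraph n ≃g Dgraph n) (v : DVert n) :
    (φ v).1 % 2 = v.1 % 2 := by
  rcases Nat.mod_two_eq_zero_or_one v.1 with h | h
  · by_contra h'
    have := odd_apply_of_odd hn heven φ.symm (v := φ v) (by omega)
    rw [RelIso.symm_apply_apply] at this
    omega
  · rw [h]
    exact odd_apply_of_odd hn heven φ h

theorem apply_eq_self_of_val_eq_one (hn : 10 ≤ n) (heven : Even n) (φ : Dgraph n ≃g Dgraph n)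
    {v : DVert n} (hv : v.1 = 1) : φ v = v := by
  by_contra hne
  have hodd : (φ v).1 % 2 = 1 := by
    have := apply_mod_two hn heven φ v
    omega
  have h1 : 1 < (φ v).1 := by
    have := (φ v).2.1
    have : (φ v).1 ≠ 1 := fun h => hne (Subtype.ext (h.trans hv.symm))
    omega
  have hlt := half_lt_ncard_neighborSet_of_odd hodd h1 (val_lt_of_odd heven hodd)
  rw [φ.ncard_neighborSet_map] at hlt
  have := ncard_neighborSet_le_of_val_eq_one hv
  omega

theorem apply_eq_self_of_succ_eq (φ : Dgraph n ≃g Dgraph n)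
    (hpar : ∀ v, (φ v).1 % 2 = v.1 % 2) {u v : DVert n} (huv : u.1 + 1 = v.1) (hu : φ u = u)
    (hpred : ∀ w : DVert n, w.1 + 1 = u.1 → φ w = w) : φ v = v := by
  have hadj : (Dgraph n).Adj u (φ v) := by
    simpa only [hu] using φ.map_adj_iff.2 (adj_of_succ_eq huv)
  have := hpar v
  rcases succ_eq_or_succ_eq_of_adj hadj (by omega) with h | h
  · exact Subtype.ext (by omega)
  · have := congrArg Subtype.val (φ.injective (hpred (φ v) h))
    omega

theorem apply_eq_self_of_mod_two (φ : Dgraph n ≃g Dgraph n)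
    (hpar : ∀ v, (φ v).1 % 2 = v.1 % 2) (hone : ∀ v : DVert n, v.1 = 1 → φ v = v)
    (v : DVert n) : φ v = v := by
  suffices ∀ k, ∀ v : DVert n, v.1 ≤ k → φ v = v from this v.1 v le_rfl
  intro k
  induction k with
  | zero => exact fun v hv => absurd v.2.1 (by omega)
  | succ k ih =>
    intro v hv
    by_cases hvk : v.1 ≤ k
    · exact ih v hvk
    by_cases hk : k = 0
    · exact hone v (by omega)
    have := v.2.2
    exact apply_eq_self_of_succ_eq φ hpar (u := ⟨k, by omega, by omega⟩) (by simp only; omega)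
      (ih _ le_rfl) fun w hw => ih w (by simp only at hw; omega)

end Dgraph

/-- For every even `n ≥ 10`, the graph `D_n` is rigid: every graph
automorphism of `D_n` is the identity. -/
theorem stmt10 (n : ℕ) (hn : 10 ≤ n) (heven : Even n) (φ : Dgraph n ≃g Dgraph n) :
    ∀ v : DVert n, φ v = v :=
  Dgraph.apply_eq_self_of_mod_two φ (Dgraph.apply_mod_two hn heven φ)
    fun _ => Dgraph.apply_eq_self_of_val_eq_one hn heven φ
end

section
/- Let k ≥ 1 and n ≥ 2^k·(2k−1). Define the graph F_n on vertex set {1,...,n} where distinct x, y are adjacent if and only if (v₂(y) = v₂(x)+1 and x ≤ y) or (v₂(x) = v₂(y)+1 and y ≤ x). Define the graph B_k on vertex set {(i,j) | 0 ≤ i,j ≤ k−1} where (i,j) and (i',j') are adjacent if and only if (i' = i+1 and j ≤ j') or (i = i'+1 and j' ≤ j). Then the map (i,j) ↦ j·2^{k+1} + 2^{i+1} is an injection from the vertices of B_k into {1,...,n} under which (i,j) and (i',j') are adjacent in B_k if and only if their images are adjacent in F_n; hence B_k is an induced subgraph of F_n. -/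
/-! The code `j·2^(k+1) + 2^(i+1)` of `(i, j)` has 2-adic valuation `i + 1`, so the first
clause of adjacency in `F_n` (valuations differing by one) is exactly `i' = i + 1`. Since
`2^(i+1) < 2^(k+1)`, codes are ordered lexicographically by `(j, i)`, which turns `x ≤ y`
into `j ≤ j'` once `i < i'`. The largest code, at `(k-1, k-1)`, is `2^k·(2k-1)`. -/

open SimpleGraph

/-- The graph `F_n` on vertex set `{1, …, n}`: distinct `x`, `y` are adjacent iff
`(v₂(y) = v₂(x) + 1 ∧ x ≤ y)` or `(v₂(x) = v₂(y) + 1 ∧ y ≤ x)`, where `v₂` is the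
2-adic valuation `padicValNat 2`. -/
def Fgraph (n : ℕ) : SimpleGraph (DVert n) :=
  SimpleGraph.fromRel (fun x y =>
    padicValNat 2 (y : ℕ) = padicValNat 2 (x : ℕ) + 1 ∧ (x : ℕ) ≤ (y : ℕ))

/-- Vertices of the graph `B_k`: pairs `(i, j)` with `0 ≤ i, j ≤ k − 1`. -/
abbrev BVert (k : ℕ) := Fin k × Fin k

/-- The graph `B_k` on vertex set `{(i,j) | 0 ≤ i,j ≤ k−1}`: `(i,j)` and `(i',j')` are
adjacent iff `(i' = i+1 ∧ j ≤ j')` or `(i = i'+1 ∧ j' ≤ j)`. -/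
def Bgraph (k : ℕ) : SimpleGraph (BVert k) :=
  SimpleGraph.fromRel (fun p q =>
    (q.1 : ℕ) = (p.1 : ℕ) + 1 ∧ (p.2 : ℕ) ≤ (q.2 : ℕ))

def SimpleGraph.Embedding.fromRel {α β : Type*} {r : α → α → Prop} {s : β → β → Prop}
    (f : α ↪ β) (h : ∀ a b, s (f a) (f b) ↔ r a b) : fromRel r ↪g fromRel s where
  toEmbedding := f
  map_rel_iff' {a b} := by simp only [fromRel_adj, f.injective.ne_iff, h]

theorem padicValNat_mul_pow_add_pow {p m i : ℕ} [Fact p.Prime] (j : ℕ) (hi : i < m) :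
    padicValNat p (j * p ^ m + p ^ i) = i := by
  have hp := (Fact.out : p.Prime)
  have hfactor : j * p ^ m + p ^ i = p ^ i * (j * p ^ (m - i) + 1) := by
    rw [mul_add, mul_one, mul_left_comm, ← pow_add, Nat.add_sub_cancel' hi.le]
  have hcoprime : ¬ p ∣ j * p ^ (m - i) + 1 := fun hdvd =>
    hp.not_dvd_one <| (Nat.dvd_add_right <| (dvd_pow_self p (by omega)).mul_left j).mp hdvd
  rw [hfactor, padicValNat.mul (pow_ne_zero _ hp.ne_zero) (Nat.succ_ne_zero _),
    padicValNat.prime_pow, padicValNat.eq_zero_of_not_dvd hcoprime, add_zero]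

theorem Nat.mul_add_le_mul_add_iff {M a a' j j' : ℕ} (ha : a ≤ a') (ha' : a' < M) :
    j * M + a ≤ j' * M + a' ↔ j ≤ j' := by
  refine ⟨fun hle => ?_, fun hj => add_le_add (Nat.mul_le_mul_right M hj) ha⟩
  by_contra! hj
  have : (j' + 1) * M ≤ j * M := Nat.mul_le_mul_right M hj
  linarith

def bCode (k : ℕ) (p : BVert k) : ℕ := (p.2 : ℕ) * 2 ^ (k + 1) + 2 ^ ((p.1 : ℕ) + 1)

section bCode

variable {k : ℕ}

theorem padicValNat_bCode (p : BVert k) : padicValNat 2 (bCode k p) = p.1 + 1 :=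
  padicValNat_mul_pow_add_pow _ (Nat.succ_lt_succ p.1.2)

theorem bCode_injective : Function.Injective (bCode k) := by
  intro p q hpq
  have hi : (p.1 : ℕ) = q.1 := by
    simpa only [padicValNat_bCode, Nat.add_right_cancel_iff] using congrArg (padicValNat 2) hpq
  unfold bCode at hpq
  rw [hi, Nat.add_right_cancel_iff] at hpq
  exact Prod.ext (Fin.ext hi) (Fin.ext (Nat.eq_of_mul_eq_mul_right (by positivity) hpq))

theorem one_le_bCode (p : BVert k) : 1 ≤ bCode k p :=
  le_add_left Nat.one_le_two_pow

theorem bCode_le (p : BVert k) : bCode k p ≤ 2 ^ k * (2 * k - 1) := by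
  obtain ⟨m, rfl⟩ : ∃ m, k = m + 1 := Nat.exists_eq_add_one.mpr (Fin.pos p.1)
  have hj : (p.2 : ℕ) ≤ m := Nat.lt_succ_iff.mp p.2.2
  have hi : (p.1 : ℕ) + 1 ≤ m + 1 := p.1.2
  calc bCode (m + 1) p ≤ m * 2 ^ (m + 2) + 2 ^ (m + 1) :=
        add_le_add (Nat.mul_le_mul_right _ hj) (Nat.pow_le_pow_right two_pos hi)
    _ = 2 ^ (m + 1) * (2 * (m + 1) - 1) := by
        rw [show 2 * (m + 1) - 1 = 2 * m + 1 by omega]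
        ring

theorem bCode_le_bCode_iff {p q : BVert k} (h : (q.1 : ℕ) = p.1 + 1) :
    bCode k p ≤ bCode k q ↔ p.2 ≤ q.2 :=
  Nat.mul_add_le_mul_add_iff (Nat.pow_le_pow_right two_pos (by omega))
    (Nat.pow_lt_pow_right one_lt_two (by omega))

theorem fgraphRel_bCode_iff (p q : BVert k) :
    (padicValNat 2 (bCode k q) = padicValNat 2 (bCode k p) + 1 ∧ bCode k p ≤ bCode k q) ↔
      ((q.1 : ℕ) = p.1 + 1 ∧ (p.2 : ℕ) ≤ q.2) := by
  simp only [padicValNat_bCode, Nat.add_right_cancel_iff]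
  exact and_congr_right bCode_le_bCode_iff

def bCodeEmbedding {n : ℕ} (hn : 2 ^ k * (2 * k - 1) ≤ n) : BVert k ↪ DVert n where
  toFun p := ⟨bCode k p, one_le_bCode p, (bCode_le p).trans hn⟩
  inj' _ _ h := bCode_injective (congrArg Subtype.val h)

end bCode

theorem stmt12_general (k n : ℕ) (hn : 2 ^ k * (2 * k - 1) ≤ n) :
    ∃ e : Bgraph k ↪g Fgraph n,
      ∀ p : BVert k,
        ((e p : DVert n) : ℕ) = (p.2 : ℕ) * 2 ^ (k + 1) + 2 ^ ((p.1 : ℕ) + 1) :=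
  ⟨.fromRel (bCodeEmbedding hn) fgraphRel_bCode_iff, fun _ => rfl⟩

/-- For `k ≥ 1` and `n ≥ 2^k·(2k−1)`, the map
`(i,j) ↦ j·2^(k+1) + 2^(i+1)` is an injection of the vertices of `B_k` into
`{1, …, n}` preserving adjacency and non-adjacency; hence `B_k` is an induced
subgraph of `F_n`. -/
theorem stmt12 (k n : ℕ) (hk : 1 ≤ k) (hn : 2 ^ k * (2 * k - 1) ≤ n) :
    ∃ e : Bgraph k ↪g Fgraph n,
      ∀ p : BVert k,
        ((e p : DVert n) : ℕ) = (p.2 : ℕ) * 2 ^ (k + 1) + 2 ^ ((p.1 : ℕ) + 1) :=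
  stmt12_general k n hn
end

section
/- For every graph G that is an induced subgraph of D_m for some m ≥ 1, there exists an integer t = t(G) such that for every n ≥ t, every factor of D_n on at least t vertices contains G as an induced subgraph. -/
open SimpleGraph

/-!
Shifting every vertex of `D_m` by a multiple `s` of `2^m` is an induced embedding of `D_m` into
`D_n` (for `s + m ≤ n`): it keeps differences, and it keeps the 2-adic valuation of each
`i ≤ m`, because `v₂(i) < m`. Every interval of length at least `2^m + m` contains such a shifted
copy of `{1, …, m}`, hence a copy of every induced subgraph of `D_m`.
-/

lemma pow_dvd_add_pow_mul_iff {p m i : ℕ} (hi : ¬ p ^ m ∣ i) (j q : ℕ) :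
    p ^ j ∣ i + p ^ m * q ↔ p ^ j ∣ i := by
  rcases le_or_gt j m with hjm | hmj
  · exact Nat.dvd_add_left ((pow_dvd_pow p hjm).mul_right q)
  · have hdiv : p ^ m ∣ p ^ j := pow_dvd_pow p hmj.le
    refine iff_of_false (fun h => hi ?_) (fun h => hi (hdiv.trans h))
    exact (Nat.dvd_add_left (dvd_mul_right _ q)).mp (hdiv.trans h)

lemma padicValNat_add_pow_mul {p m i : ℕ} (hp : p ≠ 1) (hi : ¬ p ^ m ∣ i) (q : ℕ) :
    padicValNat p (i + p ^ m * q) = padicValNat p i := by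
  have hi0 : i ≠ 0 := by rintro rfl; exact hi (dvd_zero _)
  refine eq_of_forall_le_iff fun j => ?_
  rw [← padicValNat_dvd_iff_le_of_ne_one hp (by omega), ← padicValNat_dvd_iff_le_of_ne_one hp hi0,
    pow_dvd_add_pow_mul_iff hi]

lemma exists_dvd_mem_Ico {d : ℕ} (hd : 0 < d) (c : ℕ) : ∃ s, d ∣ s ∧ c ≤ s ∧ s < c + d := by
  refine ⟨d * ((c + d - 1) / d), dvd_mul_right _ _, ?_⟩
  have := Nat.div_add_mod (c + d - 1) d
  have := Nat.mod_lt (c + d - 1) hd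
  omega

namespace Dgraph

lemma not_two_pow_dvd {m : ℕ} (x : DVert m) : ¬ 2 ^ m ∣ (x : ℕ) :=
  Nat.not_dvd_of_pos_of_lt x.2.1 (x.2.2.trans_lt m.lt_two_pow_self)

def shift {m n s : ℕ} (hs : 2 ^ m ∣ s) (hsn : s + m ≤ n) : Dgraph m ↪g Dgraph n where
  toFun x := ⟨x + s, by have := x.2; omega⟩
  inj' x y h := Subtype.ext (by simpa using congrArg Subtype.val h)
  map_rel_iff' {x y} := by
    obtain ⟨q, rfl⟩ := hs
    have hx := padicValNat_add_pow_mul (by norm_num) (not_two_pow_dvd x) q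
    have hy := padicValNat_add_pow_mul (by norm_num) (not_two_pow_dvd y) q
    change (Dgraph n).Adj ⟨x + 2 ^ m * q, _⟩ ⟨y + 2 ^ m * q, _⟩ ↔ _
    simp only [Dgraph, fromRel_adj, ne_eq, Subtype.ext_iff, hx, hy]
    omega

@[simp]
lemma shift_apply {m n s : ℕ} (hs : 2 ^ m ∣ s) (hsn : s + m ≤ n) (x : DVert m) :
    ((shift hs hsn x : DVert n) : ℕ) = x + s :=
  rfl

end Dgraph

theorem stmt13_general {V : Type} (G : SimpleGraph V) (m : ℕ)
    (hG : Nonempty (G ↪g Dgraph m)) :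
    ∃ t : ℕ, ∀ n : ℕ, t ≤ n → ∀ a b : ℕ, 1 ≤ a → b ≤ n → a + t ≤ b + 1 →
      ∃ f : G ↪g Dgraph n, ∀ v : V, a ≤ ((f v : DVert n) : ℕ) ∧ ((f v : DVert n) : ℕ) ≤ b := by
  obtain ⟨f⟩ := hG
  refine ⟨2 ^ m + m, fun n _ a b ha hbn hab => ?_⟩
  obtain ⟨s, hs, has, hsa⟩ := exists_dvd_mem_Ico (Nat.two_pow_pos m) (a - 1)
  have hsb : s + m ≤ b := by omega
  refine ⟨f.trans (Dgraph.shift hs (hsb.trans hbn)), fun v => ?_⟩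
  have := (f v).2
  simp only [RelEmbedding.coe_trans, Function.comp_apply, Dgraph.shift_apply]
  omega

/-- For every graph `G` that is an induced subgraph of `D_m` for some
`m ≥ 1`, there is `t = t(G)` such that for every `n ≥ t`, every factor of `D_n`
on at least `t` vertices (the subgraph induced by an interval `{a, …, b} ⊆ {1, …, n}`
with `b + 1 − a ≥ t`) contains `G` as an induced subgraph. -/
theorem stmt13 {V : Type} [Fintype V] (G : SimpleGraph V) (m : ℕ) (hm : 1 ≤ m)
    (hG : Nonempty (G ↪g Dgraph m)) :
    ∃ t : ℕ, ∀ n : ℕ, t ≤ n → ∀ a b : ℕ, 1 ≤ a → b ≤ n → a + t ≤ b + 1 →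
      ∃ f : G ↪g Dgraph n, ∀ v : V, a ≤ ((f v : DVert n) : ℕ) ∧ ((f v : DVert n) : ℕ) ≤ b :=
  stmt13_general G m hG
end
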